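/- arXiv:1808.01735 — 7 statements merged into one kernel-verified Lean document; each statement's English description precedes it below -/
import Mathlib

section
/- Suppose X and A are independent under B and all values of X have positive probability. Then the system has associative independence (the conditional distribution of the output given X = x1 equals that given X = x2, for all x1, x2) if and only if it has causal irrelevance (the interventional output distribution under setting the first input to x1 equals that under x2, for all x1, x2). -/
open Finset

theorem Finset.sum_ite_mul_div_cancel_left {ι K : Type*} [Semifield K] (s : Finset ι)
    (p : ι → Prop) [DecidablePred p] (f : ι → K) {c : K} (hc : c ≠ 0) :
    (∑ i ∈ s, if p i then c * f i else 0) / c = ∑ i ∈ s, if p i then f i else 0 := by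
  simp_rw [← mul_ite_zero, ← Finset.mul_sum, mul_div_cancel_left₀ _ hc]

theorem associative_independence_iff_causal_irrelevance_general
    {𝒳 𝒜 𝒪 : Type} [Fintype 𝒜] [DecidableEq 𝒪]
    (s : 𝒳 → 𝒜 → 𝒪)
    (BX : 𝒳 → ℝ) (BA : 𝒜 → ℝ)
    (hBX0 : ∀ x, 0 < BX x) :
    (∀ (x1 x2 : 𝒳) (o : 𝒪),
        (∑ a : 𝒜, if s x1 a = o then BX x1 * BA a else 0) / BX x1
          = (∑ a : 𝒜, if s x2 a = o then BX x2 * BA a else 0) / BX x2)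
      ↔ (∀ (x1 x2 : 𝒳) (o : 𝒪),
          (∑ a : 𝒜, if s x1 a = o then BA a else 0)
            = ∑ a : 𝒜, if s x2 a = o then BA a else 0) := by
  refine forall₂_congr fun x1 x2 => forall_congr' fun o => ?_
  rw [sum_ite_mul_div_cancel_left _ _ _ (hBX0 x1).ne',
    sum_ite_mul_div_cancel_left _ _ _ (hBX0 x2).ne']

/-- With independent coordinates and strictly positive marginal on
`𝒳`, associative independence holds iff causal irrelevance holds. -/
theorem associative_independence_iff_causal_irrelevance
    {𝒳 𝒜 𝒪 : Type} [Fintype 𝒳] [Fintype 𝒜] [Fintype 𝒪]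
    [Nonempty 𝒳] [Nonempty 𝒜] [Nonempty 𝒪] [DecidableEq 𝒪]
    (s : 𝒳 → 𝒜 → 𝒪)
    (BX : 𝒳 → ℝ) (BA : 𝒜 → ℝ)
    (hBX0 : ∀ x, 0 < BX x) (hBA0 : ∀ a, 0 ≤ BA a)
    (hBX1 : ∑ x : 𝒳, BX x = 1) (hBA1 : ∑ a : 𝒜, BA a = 1) :
    (∀ (x1 x2 : 𝒳) (o : 𝒪),
        (∑ a : 𝒜, if s x1 a = o then BX x1 * BA a else 0) / BX x1
          = (∑ a : 𝒜, if s x2 a = o then BX x2 * BA a else 0) / BX x2)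
      ↔ (∀ (x1 x2 : 𝒳) (o : 𝒪),
          (∑ a : 𝒜, if s x1 a = o then BA a else 0)
            = ∑ a : 𝒜, if s x2 a = o then BA a else 0) :=
  associative_independence_iff_causal_irrelevance_general s BX BA hBX0
end

section
/- Let X and O be random variables on a finite probability space. If for all outputs o and all x1, x2 with P[X=x1] > 0 and P[X=x2] > 0 we have P[O=o | X=x1] ≤ e^ε · P[O=o | X=x2], then for all o with P[O=o] > 0 and all x: P[X=x | O=o] ≤ e^ε · P[X=x] and P[X=x] ≤ e^ε · P[X=x | O=o]. -/
open Finset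

/-! Write `P x = P[X = x]`, `J x = P[O = o, X = x]` and `Q = P[O = o] = ∑ₓ J x`. Cross-multiplied,
the hypothesis reads `J x₁ P x₂ ≤ e^ε J x₂ P x₁` for all `x₁, x₂` (null values of `X` satisfy it
trivially, since `J ≤ P`). Summing over `x₂` against `∑ P = 1` gives `J x ≤ e^ε P x Q`, and summing
over `x₁` gives `Q P x ≤ e^ε J x`: these are the two bounds on the posterior `J x / Q`. -/

lemma mul_le_mul_mul_of_div_le_mul_div {J₁ P₁ J₂ P₂ c : ℝ} (hc : 0 ≤ c)
    (hJ₁ : 0 ≤ J₁) (hJP₁ : J₁ ≤ P₁) (hJ₂ : 0 ≤ J₂) (hJP₂ : J₂ ≤ P₂)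
    (h : 0 < P₁ → 0 < P₂ → J₁ / P₁ ≤ c * (J₂ / P₂)) :
    J₁ * P₂ ≤ c * J₂ * P₁ := by
  rcases (hJ₁.trans hJP₁).eq_or_lt with hP₁ | hP₁
  · rw [show J₁ = 0 by linarith, ← hP₁]
    simp
  rcases (hJ₂.trans hJP₂).eq_or_lt with hP₂ | hP₂
  · rw [← hP₂, mul_zero]
    positivity
  have := h hP₁ hP₂
  rw [← mul_div_assoc, div_le_div_iff₀ hP₁ hP₂] at this
  linarith

section CrossRatio

variable {ι : Type*} {s : Finset ι} {P J : ι → ℝ} {c : ℝ}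

lemma div_sum_le_mul_of_mul_le_mul (hP : ∑ j ∈ s, P j = 1) (hJ : 0 < ∑ j ∈ s, J j)
    (hcross : ∀ i j, J i * P j ≤ c * J j * P i) (i : ι) :
    J i / ∑ j ∈ s, J j ≤ c * P i := by
  rw [div_le_iff₀ hJ]
  calc J i = ∑ j ∈ s, J i * P j := by rw [← mul_sum, hP, mul_one]
    _ ≤ ∑ j ∈ s, c * P i * J j := sum_le_sum fun j _ => by linarith [hcross i j]
    _ = c * P i * ∑ j ∈ s, J j := (mul_sum _ _ _).symm

lemma le_mul_div_sum_of_mul_le_mul (hP : ∑ j ∈ s, P j = 1) (hJ : 0 < ∑ j ∈ s, J j)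
    (hcross : ∀ i j, J i * P j ≤ c * J j * P i) (i : ι) :
    P i ≤ c * (J i / ∑ j ∈ s, J j) := by
  rw [← mul_div_assoc, le_div_iff₀ hJ]
  calc P i * ∑ j ∈ s, J j = ∑ j ∈ s, J j * P i := 
        (mul_sum _ _ _).trans (sum_congr rfl fun _ _ => mul_comm _ _)
    _ ≤ ∑ j ∈ s, c * J i * P j := sum_le_sum fun j _ => hcross j i
    _ = c * J i := by rw [← mul_sum, hP, mul_one]

end CrossRatio

theorem assoc_indep_implies_nondisclosure_general
    {Ω 𝒳 𝒪 : Type} [Fintype Ω] [DecidableEq 𝒳] [DecidableEq 𝒪]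
    (p : Ω → ℝ) (hp0 : ∀ ω, 0 ≤ p ω) (hp1 : ∑ ω : Ω, p ω = 1)
    (X : Ω → 𝒳) (O : Ω → 𝒪) (ε : ℝ)
    (h : ∀ (o : 𝒪) (x1 x2 : 𝒳),
        0 < (∑ ω ∈ univ.filter (fun ω => X ω = x1), p ω) →
        0 < (∑ ω ∈ univ.filter (fun ω => X ω = x2), p ω) →
        (∑ ω ∈ univ.filter (fun ω => O ω = o ∧ X ω = x1), p ω) /
            (∑ ω ∈ univ.filter (fun ω => X ω = x1), p ω)
          ≤ Real.exp ε *
            ((∑ ω ∈ univ.filter (fun ω => O ω = o ∧ X ω = x2), p ω) /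
              (∑ ω ∈ univ.filter (fun ω => X ω = x2), p ω))) :
    ∀ (o : 𝒪), 0 < (∑ ω ∈ univ.filter (fun ω => O ω = o), p ω) →
      ∀ (x : 𝒳),
        (∑ ω ∈ univ.filter (fun ω => X ω = x ∧ O ω = o), p ω) /
            (∑ ω ∈ univ.filter (fun ω => O ω = o), p ω)
          ≤ Real.exp ε * (∑ ω ∈ univ.filter (fun ω => X ω = x), p ω)
        ∧ (∑ ω ∈ univ.filter (fun ω => X ω = x), p ω)
          ≤ Real.exp ε *
            ((∑ ω ∈ univ.filter (fun ω => X ω = x ∧ O ω = o), p ω) /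
              (∑ ω ∈ univ.filter (fun ω => O ω = o), p ω)) := by
  intro o ho x
  have hmaps : ∀ ω, X ω ∈ univ.image X := fun ω => mem_image_of_mem X (mem_univ ω)
  have hP : ∑ x ∈ univ.image X, ∑ ω ∈ univ.filter (fun ω => X ω = x), p ω = 1 := by
    rw [sum_fiberwise_of_maps_to (fun ω _ => hmaps ω), hp1]
  have hJ : ∑ x ∈ univ.image X, ∑ ω ∈ univ.filter (fun ω => O ω = o ∧ X ω = x), p ω
      = ∑ ω ∈ univ.filter (fun ω => O ω = o), p ω := by
    simp_rw [← filter_filter]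
    exact sum_fiberwise_of_maps_to (fun ω _ => hmaps ω) p
  have hJP : ∀ x, ∑ ω ∈ univ.filter (fun ω => O ω = o ∧ X ω = x), p ω
      ≤ ∑ ω ∈ univ.filter (fun ω => X ω = x), p ω := fun x =>
    sum_le_sum_of_subset_of_nonneg (monotone_filter_right _ fun _ _ hω => hω.2)
      fun ω _ _ => hp0 ω
  have hcross := fun x₁ x₂ => mul_le_mul_mul_of_div_le_mul_div (Real.exp_pos ε).le
    (sum_nonneg fun ω _ => hp0 ω) (hJP x₁) (sum_nonneg fun ω _ => hp0 ω) (hJP x₂) (h o x₁ x₂)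
  have hswap : univ.filter (fun ω => X ω = x ∧ O ω = o)
      = univ.filter (fun ω => O ω = o ∧ X ω = x) := filter_congr fun _ _ => and_comm
  rw [hswap, ← hJ]
  rw [← hJ] at ho
  exact ⟨div_sum_le_mul_of_mul_le_mul hP ho hcross x,
    le_mul_div_sum_of_mul_le_mul hP ho hcross x⟩

/-- ε-probabilistic associative independence of `O` on `X` implies
the statistical-nondisclosure form: the posterior of `X` given `O = o` is within
a factor `e^ε` of its prior. -/
theorem assoc_indep_implies_nondisclosure
    {Ω 𝒳 𝒪 : Type} [Fintype Ω] [DecidableEq 𝒳] [DecidableEq 𝒪]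
    (p : Ω → ℝ) (hp0 : ∀ ω, 0 ≤ p ω) (hp1 : ∑ ω : Ω, p ω = 1)
    (X : Ω → 𝒳) (O : Ω → 𝒪) (ε : ℝ) (hε : 0 ≤ ε)
    (h : ∀ (o : 𝒪) (x1 x2 : 𝒳),
        0 < (∑ ω ∈ univ.filter (fun ω => X ω = x1), p ω) →
        0 < (∑ ω ∈ univ.filter (fun ω => X ω = x2), p ω) →
        (∑ ω ∈ univ.filter (fun ω => O ω = o ∧ X ω = x1), p ω) /
            (∑ ω ∈ univ.filter (fun ω => X ω = x1), p ω)
          ≤ Real.exp ε *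
            ((∑ ω ∈ univ.filter (fun ω => O ω = o ∧ X ω = x2), p ω) /
              (∑ ω ∈ univ.filter (fun ω => X ω = x2), p ω))) :
    ∀ (o : 𝒪), 0 < (∑ ω ∈ univ.filter (fun ω => O ω = o), p ω) →
      ∀ (x : 𝒳),
        (∑ ω ∈ univ.filter (fun ω => X ω = x ∧ O ω = o), p ω) /
            (∑ ω ∈ univ.filter (fun ω => O ω = o), p ω)
          ≤ Real.exp ε * (∑ ω ∈ univ.filter (fun ω => X ω = x), p ω)
        ∧ (∑ ω ∈ univ.filter (fun ω => X ω = x), p ω)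
          ≤ Real.exp ε *
            ((∑ ω ∈ univ.filter (fun ω => X ω = x ∧ O ω = o), p ω) /
              (∑ ω ∈ univ.filter (fun ω => O ω = o), p ω)) :=
  assoc_indep_implies_nondisclosure_general p hp0 hp1 X O ε h
end

section
/- Let X and O be random variables on a finite probability space. If for all o with P[O=o] > 0 and all x we have P[X=x | O=o] ≤ e^ε · P[X=x] and P[X=x] ≤ e^ε · P[X=x | O=o], then for all o, x1, x2 with P[X=x1] > 0 and P[X=x2] > 0: P[O=o | X=x1] ≤ e^{2ε} · P[O=o | X=x2]. -/
/-!
Where `P[O = o] > 0`, the first hypothesis read through Bayes' rule gives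
`P[O = o | X = x₁] ≤ e^ε P[O = o]` and the second one gives
`P[O = o] ≤ e^ε P[O = o | X = x₂]`; chaining them costs `e^{2ε}`.
Where `P[O = o] = 0`, the left-hand side vanishes.
-/

open Finset

theorem div_le_mul_iff_div_le_mul_of_pos {a c d k : ℝ} (hc : 0 < c) (hd : 0 < d) :
    a / c ≤ k * d ↔ a / d ≤ k * c := by
  rw [div_le_iff₀ hc, div_le_iff₀ hd, mul_right_comm]

theorem le_mul_div_iff_le_mul_div_of_pos {a c d k : ℝ} (hc : 0 < c) (hd : 0 < d) :
    d ≤ k * (a / c) ↔ c ≤ k * (a / d) := by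
  rw [mul_div_assoc', le_div_iff₀ hc, mul_div_assoc', le_div_iff₀ hd, mul_comm c]

theorem sum_filter_and_eq_zero_of_sum_filter_eq_zero {Ω : Type*} [Fintype Ω]
    {p : Ω → ℝ} (hp : ∀ ω, 0 ≤ p ω) {A B : Ω → Prop} [DecidablePred A] [DecidablePred B]
    (hA : ∑ ω ∈ univ.filter A, p ω = 0) :
    ∑ ω ∈ univ.filter (fun ω => A ω ∧ B ω), p ω = 0 := by
  refine le_antisymm ?_ (sum_nonneg fun ω _ => hp ω)
  calc ∑ ω ∈ univ.filter (fun ω => A ω ∧ B ω), p ω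
      ≤ ∑ ω ∈ univ.filter A, p ω :=
        sum_le_sum_of_subset_of_nonneg (monotone_filter_right _ fun _ _ => And.left)
          fun ω _ _ => hp ω
    _ = 0 := hA

theorem nondisclosure_implies_assoc_indep_two_eps_general
    {Ω 𝒳 𝒪 : Type} [Fintype Ω] [DecidableEq 𝒳] [DecidableEq 𝒪]
    (p : Ω → ℝ) (hp0 : ∀ ω, 0 ≤ p ω)
    (X : Ω → 𝒳) (O : Ω → 𝒪) (ε : ℝ)
    (h : ∀ (o : 𝒪), 0 < (∑ ω ∈ univ.filter (fun ω => O ω = o), p ω) →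
      ∀ (x : 𝒳),
        (∑ ω ∈ univ.filter (fun ω => X ω = x ∧ O ω = o), p ω) /
            (∑ ω ∈ univ.filter (fun ω => O ω = o), p ω)
          ≤ Real.exp ε * (∑ ω ∈ univ.filter (fun ω => X ω = x), p ω)
        ∧ (∑ ω ∈ univ.filter (fun ω => X ω = x), p ω)
          ≤ Real.exp ε *
            ((∑ ω ∈ univ.filter (fun ω => X ω = x ∧ O ω = o), p ω) /
              (∑ ω ∈ univ.filter (fun ω => O ω = o), p ω))) :
    ∀ (o : 𝒪) (x1 x2 : 𝒳),
      0 < (∑ ω ∈ univ.filter (fun ω => X ω = x1), p ω) →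
      0 < (∑ ω ∈ univ.filter (fun ω => X ω = x2), p ω) →
      (∑ ω ∈ univ.filter (fun ω => O ω = o ∧ X ω = x1), p ω) /
          (∑ ω ∈ univ.filter (fun ω => X ω = x1), p ω)
        ≤ Real.exp (2 * ε) *
          ((∑ ω ∈ univ.filter (fun ω => O ω = o ∧ X ω = x2), p ω) /
            (∑ ω ∈ univ.filter (fun ω => X ω = x2), p ω)) := by
  intro o x1 x2 hx1 hx2
  set PO := ∑ ω ∈ univ.filter (fun ω => O ω = o), p ω
  rcases (sum_nonneg fun ω _ => hp0 ω : 0 ≤ PO).lt_or_eq with hPO | hPO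
  · simp only [and_comm (a := O _ = o)]
    calc _ ≤ Real.exp ε * PO :=
          (div_le_mul_iff_div_le_mul_of_pos hPO hx1).1 (h o hPO x1).1
      _ ≤ Real.exp ε * (Real.exp ε * ((∑ ω ∈ univ.filter (fun ω => X ω = x2 ∧ O ω = o), p ω) /
            (∑ ω ∈ univ.filter (fun ω => X ω = x2), p ω))) := by
          gcongr
          exact (le_mul_div_iff_le_mul_div_of_pos hPO hx2).1 (h o hPO x2).2
      _ = _ := by rw [two_mul, Real.exp_add, mul_assoc]
  · rw [sum_filter_and_eq_zero_of_sum_filter_eq_zero hp0 hPO.symm, zero_div]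
    exact mul_nonneg (Real.exp_pos _).le (div_nonneg (sum_nonneg fun ω _ => hp0 ω) hx2.le)

/-- ε-bounded change of the posterior of `X` (statistical
nondisclosure form) implies 2ε-probabilistic associative independence. -/
theorem nondisclosure_implies_assoc_indep_two_eps
    {Ω 𝒳 𝒪 : Type} [Fintype Ω] [DecidableEq 𝒳] [DecidableEq 𝒪]
    (p : Ω → ℝ) (hp0 : ∀ ω, 0 ≤ p ω) (hp1 : ∑ ω : Ω, p ω = 1)
    (X : Ω → 𝒳) (O : Ω → 𝒪) (ε : ℝ) (hε : 0 ≤ ε)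
    (h : ∀ (o : 𝒪), 0 < (∑ ω ∈ univ.filter (fun ω => O ω = o), p ω) →
      ∀ (x : 𝒳),
        (∑ ω ∈ univ.filter (fun ω => X ω = x ∧ O ω = o), p ω) /
            (∑ ω ∈ univ.filter (fun ω => O ω = o), p ω)
          ≤ Real.exp ε * (∑ ω ∈ univ.filter (fun ω => X ω = x), p ω)
        ∧ (∑ ω ∈ univ.filter (fun ω => X ω = x), p ω)
          ≤ Real.exp ε *
            ((∑ ω ∈ univ.filter (fun ω => X ω = x ∧ O ω = o), p ω) /
              (∑ ω ∈ univ.filter (fun ω => O ω = o), p ω))) :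
    ∀ (o : 𝒪) (x1 x2 : 𝒳),
      0 < (∑ ω ∈ univ.filter (fun ω => X ω = x1), p ω) →
      0 < (∑ ω ∈ univ.filter (fun ω => X ω = x2), p ω) →
      (∑ ω ∈ univ.filter (fun ω => O ω = o ∧ X ω = x1), p ω) /
          (∑ ω ∈ univ.filter (fun ω => X ω = x1), p ω)
        ≤ Real.exp (2 * ε) *
          ((∑ ω ∈ univ.filter (fun ω => O ω = o ∧ X ω = x2), p ω) /
            (∑ ω ∈ univ.filter (fun ω => X ω = x2), p ω)) :=
  nondisclosure_implies_assoc_indep_two_eps_general p hp0 X O ε h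
end

section
/- Let O be a random variable and φ an event on a finite probability space. Suppose 0 < P[φ] < 1, O is informative (∀ o, P[O = o] < 1), and O cannot trivially close φ (for every o with P[O=o] > 0, 0 < P[φ | O=o] < 1). Then for every output o, the event B := (O ≠ o) ∪ φ has positive probability, 0 < P[φ | B] < 1, and P[φ | B ∩ (O = o)] = 1 (provided P[B ∩ (O=o)] > 0). -/
open Finset

/-! If `O = o` is not almost sure, some positive-mass point `ω₀` has `O ω₀ = o' ≠ o`; as `O = o'`
cannot close `φ`, that fiber carries a positive-mass point `ω₁ ∉ φ`. This `ω₁` lies in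
`B = (O ≠ o) ∪ φ` but not in `φ`, so `P[φ] < P[B]` and `φ` stays open under `B`. On the other
hand `B ∩ (O = o) ⊆ φ`, so observing `O = o` on top of `B` closes `φ`. -/

section WeightedSums

variable {Ω : Type*} [DecidableEq Ω] (p : Ω → ℝ)

theorem exists_pos_mem_sdiff_of_sum_inter_lt {s t : Finset Ω}
    (h : ∑ ω ∈ t ∩ s, p ω < ∑ ω ∈ s, p ω) : ∃ ω ∈ s, ω ∉ t ∧ 0 < p ω := by
  have hsplit := sum_sdiff (inter_subset_right : t ∩ s ⊆ s) (f := p)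
  have hsdiff : 0 < ∑ ω ∈ s \ (t ∩ s), p ω := by linarith
  obtain ⟨ω, hω, hpos⟩ := exists_lt_of_sum_lt (f := fun _ => 0) (g := p) (by rwa [sum_const_zero])
  obtain ⟨hωs, hωt⟩ := mem_sdiff.mp hω
  exact ⟨ω, hωs, fun hωt' => hωt (mem_inter.mpr ⟨hωt', hωs⟩), hpos⟩

variable [Fintype Ω] {𝒪 : Type*} [DecidableEq 𝒪] (O : Ω → 𝒪)

theorem exists_pos_ne_of_sum_fiber_lt_one (hp1 : ∑ ω : Ω, p ω = 1) {o : 𝒪}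
    (hinf : ∑ ω ∈ univ.filter (fun ω => O ω = o), p ω < 1) : ∃ ω, O ω ≠ o ∧ 0 < p ω := by
  obtain ⟨ω, -, hωo, hpos⟩ := exists_pos_mem_sdiff_of_sum_inter_lt p (s := univ)
    (t := univ.filter (fun ω => O ω = o)) (by rwa [inter_univ, hp1])
  exact ⟨ω, by simpa using hωo, hpos⟩

theorem exists_pos_ne_notMem_of_fiberwise_open (hp0 : ∀ ω, 0 ≤ p ω) (hp1 : ∑ ω : Ω, p ω = 1)
    (φ : Finset Ω) (o : 𝒪)
    (hinf : ∑ ω ∈ univ.filter (fun ω => O ω = o), p ω < 1)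
    (hopen : ∀ o' : 𝒪, 0 < ∑ ω ∈ univ.filter (fun ω => O ω = o'), p ω →
        (∑ ω ∈ φ ∩ univ.filter (fun ω => O ω = o'), p ω) /
          (∑ ω ∈ univ.filter (fun ω => O ω = o'), p ω) < 1) :
    ∃ ω, O ω ≠ o ∧ ω ∉ φ ∧ 0 < p ω := by
  obtain ⟨ω₀, hω₀o, hω₀⟩ := exists_pos_ne_of_sum_fiber_lt_one p O hp1 hinf
  set A := univ.filter (fun ω => O ω = O ω₀)
  have hA : 0 < ∑ ω ∈ A, p ω :=
    hω₀.trans_le (single_le_sum (fun ω _ => hp0 ω) (by simp [A]))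
  obtain ⟨ω₁, hω₁A, hω₁φ, hω₁⟩ :=
    exists_pos_mem_sdiff_of_sum_inter_lt p ((div_lt_one hA).mp (hopen _ hA))
  have hω₁o : O ω₁ = O ω₀ := by simpa [A] using hω₁A
  exact ⟨ω₁, hω₁o ▸ hω₀o, hω₁φ, hω₁⟩

end WeightedSums

theorem dwork_naor_core_general
    {Ω 𝒪 : Type} [Fintype Ω] [DecidableEq Ω] [DecidableEq 𝒪]
    (p : Ω → ℝ) (hp0 : ∀ ω, 0 ≤ p ω) (hp1 : ∑ ω : Ω, p ω = 1)
    (O : Ω → 𝒪) (φ : Finset Ω)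
    (hφ : 0 < (∑ ω ∈ φ, p ω) ∧ (∑ ω ∈ φ, p ω) < 1)
    (hinf : ∀ o : 𝒪, (∑ ω ∈ univ.filter (fun ω => O ω = o), p ω) < 1)
    (hnotriv : ∀ o : 𝒪, 0 < (∑ ω ∈ univ.filter (fun ω => O ω = o), p ω) →
        0 < (∑ ω ∈ φ ∩ univ.filter (fun ω => O ω = o), p ω) /
              (∑ ω ∈ univ.filter (fun ω => O ω = o), p ω)
        ∧ (∑ ω ∈ φ ∩ univ.filter (fun ω => O ω = o), p ω) /
              (∑ ω ∈ univ.filter (fun ω => O ω = o), p ω) < 1) :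
    ∀ o : 𝒪,
      0 < (∑ ω ∈ univ.filter (fun ω => O ω ≠ o) ∪ φ, p ω)
      ∧ (0 < (∑ ω ∈ φ ∩ (univ.filter (fun ω => O ω ≠ o) ∪ φ), p ω) /
              (∑ ω ∈ univ.filter (fun ω => O ω ≠ o) ∪ φ, p ω)
          ∧ (∑ ω ∈ φ ∩ (univ.filter (fun ω => O ω ≠ o) ∪ φ), p ω) /
              (∑ ω ∈ univ.filter (fun ω => O ω ≠ o) ∪ φ, p ω) < 1)
      ∧ (0 < (∑ ω ∈ (univ.filter (fun ω => O ω ≠ o) ∪ φ) ∩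
                  univ.filter (fun ω => O ω = o), p ω) →
          (∑ ω ∈ φ ∩ ((univ.filter (fun ω => O ω ≠ o) ∪ φ) ∩
                  univ.filter (fun ω => O ω = o)), p ω) /
            (∑ ω ∈ (univ.filter (fun ω => O ω ≠ o) ∪ φ) ∩
                  univ.filter (fun ω => O ω = o), p ω) = 1) := by
  intro o
  set B := univ.filter (fun ω => O ω ≠ o) ∪ φ
  have hφB : φ ⊆ B := subset_union_right
  obtain ⟨ω, hωo, hωφ, hω⟩ :=
    exists_pos_ne_notMem_of_fiberwise_open p O hp0 hp1 φ o (hinf o) fun o' h => (hnotriv o' h).2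
  have hφ_lt_B : ∑ ω ∈ φ, p ω < ∑ ω ∈ B, p ω :=
    sum_lt_sum_of_subset hφB (by simp [B, hωo]) hωφ hω fun j _ _ => hp0 j
  have hB : 0 < ∑ ω ∈ B, p ω := hφ.1.trans hφ_lt_B
  have hclosed : φ ∩ (B ∩ univ.filter (fun ω => O ω = o)) = B ∩ univ.filter (fun ω => O ω = o) :=
    inter_eq_right.mpr fun ω hω => by
      simp only [B, mem_inter, mem_union, mem_filter, mem_univ, true_and] at hω
      tauto
  rw [inter_eq_left.mpr hφB, hclosed]
  exact ⟨hB, ⟨div_pos hφ.1 hB, (div_lt_one hB).mpr hφ_lt_B⟩, fun h => div_self h.ne'⟩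

/-- If `0 < P[φ] < 1`, `O` is informative, and `O` cannot
trivially close `φ`, then for every output `o`, the background condition
`B = (O ≠ o) ∪ φ` has positive probability, `φ` is open for `B`, and `φ` is
resolved (probability 1) given `B ∩ (O = o)` whenever that event has positive
probability. -/
theorem dwork_naor_core
    {Ω 𝒪 : Type} [Fintype Ω] [Fintype 𝒪] [DecidableEq Ω] [DecidableEq 𝒪]
    (p : Ω → ℝ) (hp0 : ∀ ω, 0 ≤ p ω) (hp1 : ∑ ω : Ω, p ω = 1)
    (O : Ω → 𝒪) (φ : Finset Ω)
    (hφ : 0 < (∑ ω ∈ φ, p ω) ∧ (∑ ω ∈ φ, p ω) < 1)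
    (hinf : ∀ o : 𝒪, (∑ ω ∈ univ.filter (fun ω => O ω = o), p ω) < 1)
    (hnotriv : ∀ o : 𝒪, 0 < (∑ ω ∈ univ.filter (fun ω => O ω = o), p ω) →
        0 < (∑ ω ∈ φ ∩ univ.filter (fun ω => O ω = o), p ω) /
              (∑ ω ∈ univ.filter (fun ω => O ω = o), p ω)
        ∧ (∑ ω ∈ φ ∩ univ.filter (fun ω => O ω = o), p ω) /
              (∑ ω ∈ univ.filter (fun ω => O ω = o), p ω) < 1) :
    ∀ o : 𝒪,
      0 < (∑ ω ∈ univ.filter (fun ω => O ω ≠ o) ∪ φ, p ω)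
      ∧ (0 < (∑ ω ∈ φ ∩ (univ.filter (fun ω => O ω ≠ o) ∪ φ), p ω) /
              (∑ ω ∈ univ.filter (fun ω => O ω ≠ o) ∪ φ, p ω)
          ∧ (∑ ω ∈ φ ∩ (univ.filter (fun ω => O ω ≠ o) ∪ φ), p ω) /
              (∑ ω ∈ univ.filter (fun ω => O ω ≠ o) ∪ φ, p ω) < 1)
      ∧ (0 < (∑ ω ∈ (univ.filter (fun ω => O ω ≠ o) ∪ φ) ∩
                  univ.filter (fun ω => O ω = o), p ω) →
          (∑ ω ∈ φ ∩ ((univ.filter (fun ω => O ω ≠ o) ∪ φ) ∩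
                  univ.filter (fun ω => O ω = o)), p ω) /
            (∑ ω ∈ (univ.filter (fun ω => O ω ≠ o) ∪ φ) ∩
                  univ.filter (fun ω => O ω = o), p ω) = 1) :=
  dwork_naor_core_general p hp0 hp1 O φ hφ hinf hnotriv
end

section
/- For any random variable O (finite range) and event φ on a finite probability space, at least one of the following holds: (1) P[φ] ∈ {0, 1}; (2) there exists o with P[O = o] = 1; (3) there exists o with P[O=o] > 0 and P[φ | O=o] ∈ {0,1}; or (4) for all o, the event (O ≠ o) ∪ φ has positive probability with 0 < P[φ | (O≠o) ∪ φ] < 1, while P[φ | ((O≠o) ∪ φ) ∩ (O=o)] = 1 whenever that conditioning event has positive probability. -/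
open Finset

/-!
Assume `0 < P[φ]`, that no output has probability one and that no output of positive probability
settles `φ`. For an output `o`, some other output `o'` has positive probability, and since `O = o'`
does not settle `φ`, the event `{O = o'} \ φ ⊆ {O ≠ o} \ φ` has positive mass. So the background
condition `(O ≠ o) ∪ φ` is strictly heavier than `φ` and leaves `φ` open, whereas its intersection
with `{O = o}` lies inside `φ`.
-/

variable {Ω 𝒪 : Type*} {p : Ω → ℝ}

theorem exists_ne_zero_notMem_of_sum_ne_sum_univ [Fintype Ω] {s : Finset Ω}
    (h : ∑ ω ∈ s, p ω ≠ ∑ ω, p ω) : ∃ ω ∉ s, p ω ≠ 0 := by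
  classical
  have hcompl : ∑ ω ∈ sᶜ, p ω ≠ 0 := fun h0 => h (by rw [← sum_compl_add_sum s p, h0, zero_add])
  obtain ⟨ω, hω, hpω⟩ := exists_ne_zero_of_sum_ne_zero hcompl
  exact ⟨ω, mem_compl.1 hω, hpω⟩

section

variable [DecidableEq Ω]

theorem sum_sdiff_pos_of_div_ne_one (hp0 : ∀ ω, 0 ≤ p ω) {s φ : Finset Ω}
    (hs : 0 < ∑ ω ∈ s, p ω) (h : (∑ ω ∈ φ ∩ s, p ω) / (∑ ω ∈ s, p ω) ≠ 1) :
    0 < ∑ ω ∈ s \ φ, p ω := by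
  refine (sum_nonneg fun ω _ => hp0 ω).lt_of_ne' fun h0 => h ?_
  have hsplit := sum_inter_add_sum_sdiff s φ p
  rw [h0, add_zero] at hsplit
  rw [inter_comm, hsplit, div_self hs.ne']

theorem sum_filter_ne_sdiff_pos [Fintype Ω] [DecidableEq 𝒪] (hp0 : ∀ ω, 0 ≤ p ω)
    (O : Ω → 𝒪) (φ : Finset Ω) {o : 𝒪}
    (hfiber : ∑ ω ∈ univ.filter (fun ω => O ω = o), p ω ≠ ∑ ω, p ω)
    (hopen : ∀ o', 0 < ∑ ω ∈ univ.filter (fun ω => O ω = o'), p ω →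
      0 < ∑ ω ∈ univ.filter (fun ω => O ω = o') \ φ, p ω) :
    0 < ∑ ω ∈ univ.filter (fun ω => O ω ≠ o) \ φ, p ω := by
  obtain ⟨ω₀, hω₀, hpω₀⟩ := exists_ne_zero_notMem_of_sum_ne_sum_univ hfiber
  have hO : O ω₀ ≠ o := by simpa using hω₀
  have hpos : 0 < ∑ ω ∈ univ.filter (fun ω => O ω = O ω₀), p ω :=
    ((hp0 ω₀).lt_of_ne' hpω₀).trans_le (single_le_sum (fun ω _ => hp0 ω) (by simp))
  refine (hopen _ hpos).trans_le (sum_le_sum_of_subset_of_nonneg ?_ fun ω _ _ => hp0 ω)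
  exact sdiff_subset_sdiff (fun ω hω => by simp_all) le_rfl

theorem disclosure_of_sum_sdiff_pos {φ A B : Finset Ω}
    (hAB : Disjoint A B) (hφ : 0 < ∑ ω ∈ φ, p ω) (hA : 0 < ∑ ω ∈ A \ φ, p ω) :
    0 < ∑ ω ∈ A ∪ φ, p ω
    ∧ 0 < (∑ ω ∈ φ ∩ (A ∪ φ), p ω) / (∑ ω ∈ A ∪ φ, p ω)
    ∧ (∑ ω ∈ φ ∩ (A ∪ φ), p ω) / (∑ ω ∈ A ∪ φ, p ω) < 1
    ∧ (0 < ∑ ω ∈ (A ∪ φ) ∩ B, p ω →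
        (∑ ω ∈ φ ∩ ((A ∪ φ) ∩ B), p ω) / (∑ ω ∈ (A ∪ φ) ∩ B, p ω) = 1) := by
  have hsplit : ∑ ω ∈ A ∪ φ, p ω = ∑ ω ∈ A \ φ, p ω + ∑ ω ∈ φ, p ω := by
    rw [← sum_sdiff subset_union_right, union_sdiff_right]
  have hlt : ∑ ω ∈ φ, p ω < ∑ ω ∈ A ∪ φ, p ω := by linarith
  have hpos : 0 < ∑ ω ∈ A ∪ φ, p ω := hφ.trans hlt
  have hinter : (A ∪ φ) ∩ B = φ ∩ B := by
    rw [union_inter_distrib_right, disjoint_iff_inter_eq_empty.1 hAB, empty_union]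
  rw [inter_eq_left.2 subset_union_right, hinter, ← inter_assoc, inter_self]
  exact ⟨hpos, div_pos hφ hpos, (div_lt_one hpos).2 hlt, fun h => div_self h.ne'⟩

end

theorem generic_impossibility_general
    {Ω 𝒪 : Type} [Fintype Ω] [DecidableEq Ω] [DecidableEq 𝒪]
    (p : Ω → ℝ) (hp0 : ∀ ω, 0 ≤ p ω) (hp1 : ∑ ω : Ω, p ω = 1)
    (O : Ω → 𝒪) (φ : Finset Ω) :
    ((∑ ω ∈ φ, p ω) = 0 ∨ (∑ ω ∈ φ, p ω) = 1)
    ∨ (∃ o : 𝒪, (∑ ω ∈ univ.filter (fun ω => O ω = o), p ω) = 1)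
    ∨ (∃ o : 𝒪, 0 < (∑ ω ∈ univ.filter (fun ω => O ω = o), p ω)
        ∧ ((∑ ω ∈ φ ∩ univ.filter (fun ω => O ω = o), p ω) /
              (∑ ω ∈ univ.filter (fun ω => O ω = o), p ω) = 0
          ∨ (∑ ω ∈ φ ∩ univ.filter (fun ω => O ω = o), p ω) /
              (∑ ω ∈ univ.filter (fun ω => O ω = o), p ω) = 1))
    ∨ (∀ o : 𝒪,
        0 < (∑ ω ∈ univ.filter (fun ω => O ω ≠ o) ∪ φ, p ω)
        ∧ 0 < (∑ ω ∈ φ ∩ (univ.filter (fun ω => O ω ≠ o) ∪ φ), p ω) /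
                (∑ ω ∈ univ.filter (fun ω => O ω ≠ o) ∪ φ, p ω)
        ∧ (∑ ω ∈ φ ∩ (univ.filter (fun ω => O ω ≠ o) ∪ φ), p ω) /
                (∑ ω ∈ univ.filter (fun ω => O ω ≠ o) ∪ φ, p ω) < 1
        ∧ (0 < (∑ ω ∈ (univ.filter (fun ω => O ω ≠ o) ∪ φ) ∩
                    univ.filter (fun ω => O ω = o), p ω) →
            (∑ ω ∈ φ ∩ ((univ.filter (fun ω => O ω ≠ o) ∪ φ) ∩
                    univ.filter (fun ω => O ω = o)), p ω) /
              (∑ ω ∈ (univ.filter (fun ω => O ω ≠ o) ∪ φ) ∩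
                    univ.filter (fun ω => O ω = o), p ω) = 1)) := by
  refine or_iff_not_imp_left.2 fun h1 => or_iff_not_imp_left.2 fun h2 =>
    or_iff_not_imp_left.2 fun h3 => ?_
  push Not at h1 h2 h3
  have hφ : 0 < ∑ ω ∈ φ, p ω := (sum_nonneg fun ω _ => hp0 ω).lt_of_ne' h1.1
  intro o
  have hfiber : ∑ ω ∈ univ.filter (fun ω => O ω = o), p ω ≠ ∑ ω, p ω := hp1 ▸ h2 o
  have hout := sum_filter_ne_sdiff_pos hp0 O φ hfiber
    fun o' ho' => sum_sdiff_pos_of_div_ne_one hp0 ho' (h3 o' ho').2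
  exact disclosure_of_sum_sdiff_pos (disjoint_filter_filter_not _ _ _).symm hφ hout

/-- Generic impossibility theorem: for any `O` and event `φ`, one
of the following holds: (1) `P[φ] ∈ {0,1}`; (2) some output has probability 1
(uninformative); (3) some positive-probability output closes `φ`; or (4) for
every output `o`, the background condition `(O ≠ o) ∪ φ` has positive
probability, leaves `φ` open, and observing `O = o` on top of it resolves `φ`. -/
theorem generic_impossibility
    {Ω 𝒪 : Type} [Fintype Ω] [Fintype 𝒪] [DecidableEq Ω] [DecidableEq 𝒪]
    (p : Ω → ℝ) (hp0 : ∀ ω, 0 ≤ p ω) (hp1 : ∑ ω : Ω, p ω = 1)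
    (O : Ω → 𝒪) (φ : Finset Ω) :
    ((∑ ω ∈ φ, p ω) = 0 ∨ (∑ ω ∈ φ, p ω) = 1)
    ∨ (∃ o : 𝒪, (∑ ω ∈ univ.filter (fun ω => O ω = o), p ω) = 1)
    ∨ (∃ o : 𝒪, 0 < (∑ ω ∈ univ.filter (fun ω => O ω = o), p ω)
        ∧ ((∑ ω ∈ φ ∩ univ.filter (fun ω => O ω = o), p ω) /
              (∑ ω ∈ univ.filter (fun ω => O ω = o), p ω) = 0
          ∨ (∑ ω ∈ φ ∩ univ.filter (fun ω => O ω = o), p ω) /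
              (∑ ω ∈ univ.filter (fun ω => O ω = o), p ω) = 1))
    ∨ (∀ o : 𝒪,
        0 < (∑ ω ∈ univ.filter (fun ω => O ω ≠ o) ∪ φ, p ω)
        ∧ 0 < (∑ ω ∈ φ ∩ (univ.filter (fun ω => O ω ≠ o) ∪ φ), p ω) /
                (∑ ω ∈ univ.filter (fun ω => O ω ≠ o) ∪ φ, p ω)
        ∧ (∑ ω ∈ φ ∩ (univ.filter (fun ω => O ω ≠ o) ∪ φ), p ω) /
                (∑ ω ∈ univ.filter (fun ω => O ω ≠ o) ∪ φ, p ω) < 1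
        ∧ (0 < (∑ ω ∈ (univ.filter (fun ω => O ω ≠ o) ∪ φ) ∩
                    univ.filter (fun ω => O ω = o), p ω) →
            (∑ ω ∈ φ ∩ ((univ.filter (fun ω => O ω ≠ o) ∪ φ) ∩
                    univ.filter (fun ω => O ω = o)), p ω) /
              (∑ ω ∈ (univ.filter (fun ω => O ω ≠ o) ∪ φ) ∩
                    univ.filter (fun ω => O ω = o), p ω) = 1)) :=
  generic_impossibility_general p hp0 hp1 O φ
end

section
/- If a randomized database mechanism s satisfies ε-differential privacy (changing any single row changes output probabilities by at most a factor e^ε), and under an adversary's prior the database rows D_1, ..., D_k are mutually independent and the mechanism's randomness R is independent of the rows, then for every row index i, row values d and d' of positive prior probability, and output o: P[s(D, R) = o | D_i = d] ≤ e^ε · P[s(D, R) = o | D_i = d']. -/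
/-!
Conditioning on `D i = x` under a product prior, the weight of row `i` factors out, and the
remaining databases can be matched with those having `D i = x'` by overwriting row `i`. The
matched terms carry the same weight of the other rows, so the differential privacy bound for a
change of row `i` applies term by term.
-/

open Finset Function

section UpdateReindex

variable {ι : Type*} [Fintype ι] [DecidableEq ι] {β : ι → Type*}

theorem prod_apply_update_eq_mul_prod_erase {M : Type*} [CommMonoid M] (w : ∀ j, β j → M)
    (f : ∀ j, β j) (i : ι) (x : β i) :
    ∏ j, w j (update f i x j) = w i x * ∏ j ∈ univ.erase i, w j (f j) := by
  rw [← mul_prod_erase univ _ (mem_univ i), update_self]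
  congr 1
  refine prod_congr rfl fun j hj => ?_
  rw [update_of_ne (ne_of_mem_erase hj)]

variable [∀ j, Fintype (β j)] [∀ j, DecidableEq (β j)]

theorem sum_filter_apply_eq_sum_filter_update {M : Type*} [AddCommMonoid M]
    (g : (∀ j, β j) → M) (i : ι) (x y : β i) :
    ∑ f with f i = x, g f = ∑ f with f i = y, g (update f i x) := by
  refine sum_nbij' (update · i y) (update · i x) ?_ ?_ ?_ ?_ ?_ <;>
    intro f hf <;> simp only [mem_filter, mem_univ, true_and] at hf ⊢
  · exact update_self i y f
  · exact update_self i x f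
  · rw [update_idem, ← hf, update_eq_self]
  · rw [update_idem, ← hf, update_eq_self]
  · rw [update_idem, ← hf, update_eq_self]

theorem sum_filter_prod_mul_div_le {w : ∀ j, β j → ℝ} (hw : ∀ j b, 0 ≤ w j b)
    {Q : (∀ j, β j) → ℝ} {c : ℝ} {i : ι} {x x' : β i}
    (hQ : ∀ f, Q (update f i x) ≤ c * Q (update f i x'))
    (hx : w i x ≠ 0) (hx' : w i x' ≠ 0) :
    (∑ f with f i = x, (∏ j, w j (f j)) * Q f) / w i x
      ≤ c * ((∑ f with f i = x', (∏ j, w j (f j)) * Q f) / w i x') := by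
  have factor : ∀ z, ∑ f with f i = z, (∏ j, w j (f j)) * Q f
      = w i z * ∑ f with f i = x', (∏ j ∈ univ.erase i, w j (f j)) * Q (update f i z) := by
    intro z
    rw [sum_filter_apply_eq_sum_filter_update _ i z x', mul_sum]
    simp only [prod_apply_update_eq_mul_prod_erase, mul_assoc]
  rw [factor x, factor x', mul_div_cancel_left₀ _ hx, mul_div_cancel_left₀ _ hx', mul_sum]
  refine sum_le_sum fun f _ => ?_
  calc (∏ j ∈ univ.erase i, w j (f j)) * Q (update f i x)
      ≤ (∏ j ∈ univ.erase i, w j (f j)) * (c * Q (update f i x')) :=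
        mul_le_mul_of_nonneg_left (hQ f) (prod_nonneg fun j _ => hw j (f j))
    _ = c * ((∏ j ∈ univ.erase i, w j (f j)) * Q (update f i x')) := mul_left_comm _ _ _

end UpdateReindex

section Mechanism

variable {ι 𝒟 ℛ 𝒪 : Type*} [Fintype ℛ] [DecidableEq 𝒪]

def outputProb (s : (ι → 𝒟) → ℛ → 𝒪) (BR : ℛ → ℝ) (db : ι → 𝒟) (o : 𝒪) : ℝ :=
  ∑ r, if s db r = o then BR r else 0

theorem sum_sum_ite_and_eq_sum_filter_mul_outputProb [Fintype ι] [DecidableEq ι] [Fintype 𝒟]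
    [DecidableEq 𝒟] (s : (ι → 𝒟) → ℛ → 𝒪) (BR : ℛ → ℝ) (P : (ι → 𝒟) → ℝ) (i : ι) (x : 𝒟) (o : 𝒪) :
    ∑ db, ∑ r, (if db i = x ∧ s db r = o then P db * BR r else 0)
      = ∑ db with db i = x, P db * outputProb s BR db o := by
  rw [sum_filter]
  refine sum_congr rfl fun db _ => ?_
  by_cases h : db i = x <;> simp [h, outputProb, mul_sum]

end Mechanism

theorem dp_implies_assoc_inferential_privacy_general
    {𝒟 ℛ 𝒪 : Type} [Fintype 𝒟] [Fintype ℛ]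
    [DecidableEq 𝒟] [DecidableEq 𝒪] {k : ℕ}
    (s : (Fin k → 𝒟) → ℛ → 𝒪) (ε : ℝ)
    (BR : ℛ → ℝ)
    (Bi : Fin k → 𝒟 → ℝ)
    (hBi0 : ∀ i d, 0 ≤ Bi i d)
    (hDP : ∀ (i : Fin k) (d : Fin k → 𝒟) (x x' : 𝒟) (o : 𝒪),
        (∑ r : ℛ, if s (Function.update d i x) r = o then BR r else 0)
          ≤ Real.exp ε *
            ∑ r : ℛ, if s (Function.update d i x') r = o then BR r else 0) :
    ∀ (i : Fin k) (d d' : 𝒟) (o : 𝒪),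
      0 < Bi i d → 0 < Bi i d' →
      (∑ db : Fin k → 𝒟, ∑ r : ℛ,
          if db i = d ∧ s db r = o then (∏ j : Fin k, Bi j (db j)) * BR r else 0)
          / Bi i d
        ≤ Real.exp ε *
          ((∑ db : Fin k → 𝒟, ∑ r : ℛ,
              if db i = d' ∧ s db r = o then (∏ j : Fin k, Bi j (db j)) * BR r else 0)
            / Bi i d') := by
  intro i d d' o hd hd'
  simp only [sum_sum_ite_and_eq_sum_filter_mul_outputProb]
  exact sum_filter_prod_mul_div_le hBi0 (Q := fun db => outputProb s BR db o)
    (fun db => hDP i db d d' o) hd.ne' hd'.ne'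

/-- ε-differential privacy plus a row-independent adversary prior
(and fresh mechanism randomness) implies ε-associative-inferential privacy:
conditioning on two values of a single row changes the posterior output
probability by at most a factor `e^ε`. -/
theorem dp_implies_assoc_inferential_privacy
    {𝒟 ℛ 𝒪 : Type} [Fintype 𝒟] [Fintype ℛ] [Fintype 𝒪]
    [DecidableEq 𝒟] [DecidableEq 𝒪] {k : ℕ}
    (s : (Fin k → 𝒟) → ℛ → 𝒪) (ε : ℝ) (hε : 0 ≤ ε)
    (BR : ℛ → ℝ) (hBR0 : ∀ r, 0 ≤ BR r) (hBR1 : ∑ r : ℛ, BR r = 1)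
    (Bi : Fin k → 𝒟 → ℝ)
    (hBi0 : ∀ i d, 0 ≤ Bi i d) (hBi1 : ∀ i, ∑ d : 𝒟, Bi i d = 1)
    (hDP : ∀ (i : Fin k) (d : Fin k → 𝒟) (x x' : 𝒟) (o : 𝒪),
        (∑ r : ℛ, if s (Function.update d i x) r = o then BR r else 0)
          ≤ Real.exp ε *
            ∑ r : ℛ, if s (Function.update d i x') r = o then BR r else 0) :
    ∀ (i : Fin k) (d d' : 𝒟) (o : 𝒪),
      0 < Bi i d → 0 < Bi i d' →
      (∑ db : Fin k → 𝒟, ∑ r : ℛ,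
          if db i = d ∧ s db r = o then (∏ j : Fin k, Bi j (db j)) * BR r else 0)
          / Bi i d
        ≤ Real.exp ε *
          ((∑ db : Fin k → 𝒟, ∑ r : ℛ,
              if db i = d' ∧ s db r = o then (∏ j : Fin k, Bi j (db j)) * BR r else 0)
            / Bi i d') :=
  dp_implies_assoc_inferential_privacy_general s ε BR Bi hBi0 hDP
end

section
/- Let s : 𝒳 → 𝒜 → 𝒪 and let B be a joint pmf on 𝒳 × 𝒜 with independent coordinates, strictly positive on 𝒳. If the output O = s(X, A) is statistically independent of X under B (associative independence), then for every x1, x2 in 𝒳 and output o, the interventional distributions agree: P[s(x1, A) = o] = P[s(x2, A) = o]; conversely, causal irrelevance implies associative independence under the same hypotheses. -/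
open Finset

/-!
Under the product law, `P[O = o ∧ X = x] = B_X(x) · P[s(x, A) = o]` and `P[O = o]` is the
`B_X`-average of the `P[s(x, A) = o]`. Cancelling `B_X(x) > 0`, independence says that each
`P[s(x, A) = o]` equals its own average, i.e. that they all coincide.
-/

noncomputable def interventionalProb {𝒳 𝒜 𝒪 : Type} [Fintype 𝒜] [DecidableEq 𝒪]
    (s : 𝒳 → 𝒜 → 𝒪) (BA : 𝒜 → ℝ) (x : 𝒳) (o : 𝒪) : ℝ :=
  ∑ a, if s x a = o then BA a else 0

section ProductLaw

variable {𝒳 𝒜 𝒪 : Type} [Fintype 𝒳] [Fintype 𝒜] [DecidableEq 𝒪]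
  (s : 𝒳 → 𝒜 → 𝒪) (BX : 𝒳 → ℝ) (BA : 𝒜 → ℝ)

theorem sum_prod_ite_output_and_fst_eq [DecidableEq 𝒳] (x : 𝒳) (o : 𝒪) :
    (∑ p : 𝒳 × 𝒜, if s p.1 p.2 = o ∧ p.1 = x then BX p.1 * BA p.2 else 0)
      = BX x * interventionalProb s BA x o := by
  rw [Fintype.sum_prod_type, Finset.sum_eq_single x (fun y _ hy => by simp [hy]) (by simp)]
  simp [interventionalProb, Finset.mul_sum, mul_ite]

theorem sum_prod_ite_output_eq (o : 𝒪) :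
    (∑ p : 𝒳 × 𝒜, if s p.1 p.2 = o then BX p.1 * BA p.2 else 0)
      = ∑ x, BX x * interventionalProb s BA x o := by
  rw [Fintype.sum_prod_type]
  simp [interventionalProb, Finset.mul_sum, mul_ite]

end ProductLaw

theorem forall_eq_weighted_sum_iff_forall_eq {ι R : Type*} [Fintype ι] [CommSemiring R]
    {w g : ι → R}
    (hw : ∑ i, w i = 1) :
    (∀ i, g i = ∑ j, w j * g j) ↔ ∀ i j, g i = g j := by
  constructor
  · intro h i j
    rw [h i, h j]
  · intro h i
    calc g i = ∑ j, w j * g i := by rw [← Finset.sum_mul, hw, one_mul]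
      _ = ∑ j, w j * g j := Finset.sum_congr rfl fun j _ => by rw [h i j]

theorem statistical_independence_iff_interventional_agreement_general
    {𝒳 𝒜 𝒪 : Type} [Fintype 𝒳] [Fintype 𝒜]
    [DecidableEq 𝒳] [DecidableEq 𝒪]
    (s : 𝒳 → 𝒜 → 𝒪)
    (BX : 𝒳 → ℝ) (BA : 𝒜 → ℝ)
    (hBX0 : ∀ x, 0 < BX x)
    (hBX1 : ∑ x : 𝒳, BX x = 1) :
    (∀ (x : 𝒳) (o : 𝒪),
        (∑ p : 𝒳 × 𝒜, if s p.1 p.2 = o ∧ p.1 = x then BX p.1 * BA p.2 else 0)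
          = (∑ p : 𝒳 × 𝒜, if s p.1 p.2 = o then BX p.1 * BA p.2 else 0) * BX x)
      ↔ (∀ (x1 x2 : 𝒳) (o : 𝒪),
          (∑ a : 𝒜, if s x1 a = o then BA a else 0)
            = ∑ a : 𝒜, if s x2 a = o then BA a else 0) := by
  set f := interventionalProb s BA
  simp_rw [sum_prod_ite_output_and_fst_eq, sum_prod_ite_output_eq]
  have cancel : ∀ x o, BX x * f x o = (∑ y, BX y * f y o) * BX x ↔
      f x o = ∑ y, BX y * f y o := fun x o => by
    rw [mul_comm _ (BX x), mul_right_inj' (hBX0 x).ne']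
  calc (∀ x o, BX x * f x o = (∑ y, BX y * f y o) * BX x)
      ↔ ∀ o x, f x o = ∑ y, BX y * f y o := by simp only [cancel]; exact forall_comm
    _ ↔ ∀ o x1 x2, f x1 o = f x2 o :=
        forall_congr' fun o => forall_eq_weighted_sum_iff_forall_eq hBX1
    _ ↔ ∀ x1 x2 o, f x1 o = f x2 o :=
        ⟨fun h x1 x2 o => h o x1 x2, fun h o x1 x2 => h x1 x2 o⟩

/-- With independent coordinates (`B (x,a) = BX x * BA a`,
`BX` strictly positive), the output `O = s(X,A)` is statistically independent
of `X` iff the interventional distributions `P[s(x, A) = o]` agree for all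
values of the first input (causal irrelevance). -/
theorem statistical_independence_iff_interventional_agreement
    {𝒳 𝒜 𝒪 : Type} [Fintype 𝒳] [Fintype 𝒜] [Fintype 𝒪]
    [DecidableEq 𝒳] [DecidableEq 𝒪]
    (s : 𝒳 → 𝒜 → 𝒪)
    (BX : 𝒳 → ℝ) (BA : 𝒜 → ℝ)
    (hBX0 : ∀ x, 0 < BX x) (hBA0 : ∀ a, 0 ≤ BA a)
    (hBX1 : ∑ x : 𝒳, BX x = 1) (hBA1 : ∑ a : 𝒜, BA a = 1) :
    (∀ (x : 𝒳) (o : 𝒪),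
        (∑ p : 𝒳 × 𝒜, if s p.1 p.2 = o ∧ p.1 = x then BX p.1 * BA p.2 else 0)
          = (∑ p : 𝒳 × 𝒜, if s p.1 p.2 = o then BX p.1 * BA p.2 else 0) * BX x)
      ↔ (∀ (x1 x2 : 𝒳) (o : 𝒪),
          (∑ a : 𝒜, if s x1 a = o then BA a else 0)
            = ∑ a : 𝒜, if s x2 a = o then BA a else 0) :=
  statistical_independence_iff_interventional_agreement_general s BX BA hBX0 hBX1
end
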